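/- arXiv:2510.06522 — 3 statements merged into one kernel-verified Lean document; each statement's English description precedes it below -/
import Mathlib

section
/- Let p = (p_i) and q = (q_j) be probability distributions over [N], and let S ⊆ [N]² satisfy Pr_{(i,j)∼p×q}[(i,j) ∈ S] = ε > 0. Then for every γ > 0 there exists a set X ⊆ [N] of size at most ⌈1/(e·ε·γ)⌉ such that Pr_{(i,j)∼p×q}[∃ k ∈ X : (i,k) ∈ S | (i,j) ∈ S] ≥ 1 - γ. -/
open Finset


/-- If `p, q` are distributions over `[N]` and `S ⊆ [N]²` has probability `ε > 0`
under `p × q`, then for every `γ > 0` there is a set `X ⊆ [N]` of size at most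
`⌈1/(e·ε·γ)⌉` such that conditioned on `(i,j) ∈ S`, the probability that some
`k ∈ X` satisfies `(i,k) ∈ S` is at least `1 - γ`. -/
theorem hitting_set_for_peaked_distributions (N : ℕ) (p q : Fin N → ℝ)
    (hp : ∀ i, 0 ≤ p i) (hq : ∀ j, 0 ≤ q j)
    (hp1 : ∑ i, p i = 1) (hq1 : ∑ j, q j = 1)
    (S : Finset (Fin N × Fin N)) (ε γ : ℝ)
    (hε : ∑ ij ∈ S, p ij.1 * q ij.2 = ε) (hεpos : 0 < ε) (hγ : 0 < γ) :
    ∃ X : Finset (Fin N),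
      X.card ≤ ⌈1 / (Real.exp 1 * ε * γ)⌉₊ ∧
      1 - γ ≤ (∑ ij ∈ S.filter (fun ij => ∃ k ∈ X, (ij.1, k) ∈ S), p ij.1 * q ij.2) / ε := by
  classical
  set t := ⌈1 / (Real.exp 1 * ε * γ)⌉₊ with htdef
  set a : Fin N → ℝ := fun i => ∑ j ∈ univ.filter (fun j => (i, j) ∈ S), q j with ha
  -- key decomposition lemma
  have key : ∀ (P : Fin N → Prop) [DecidablePred P],
      ∑ ij ∈ S.filter (fun ij => P ij.1), p ij.1 * q ij.2
        = ∑ i ∈ univ.filter P, p i * a i := by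
    intro P _
    rw [Finset.sum_finset_product (S.filter (fun ij => P ij.1)) (univ.filter P)
      (fun i => univ.filter (fun j => (i, j) ∈ S))
      (by intro ij; simp [and_comm])]
    simp [ha, Finset.mul_sum]
  have hεa : ∑ i, p i * a i = ε := by
    have h := key (fun _ => True)
    simpa [Finset.filter_true_of_mem, hε] using h.symm
  have ha0 : ∀ i, 0 ≤ a i := fun i => Finset.sum_nonneg fun j _ => hq j
  have ha1 : ∀ i, a i ≤ 1 := by
    intro i
    rw [ha]
    calc ∑ j ∈ univ.filter (fun j => (i, j) ∈ S), q j
        ≤ ∑ j, q j := Finset.sum_le_sum_of_subset_of_nonneg (Finset.filter_subset _ _)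
          (fun j _ _ => hq j)
      _ = 1 := hq1
  have hte : (0:ℝ) < Real.exp 1 * ε * γ := by positivity
  have ht1 : 1 ≤ t := Nat.one_le_ceil_iff.mpr (by positivity)
  have htt : 1 / (Real.exp 1 * ε * γ) ≤ (t : ℝ) := Nat.le_ceil _
  have htpos : (0:ℝ) < t := by exact_mod_cast Nat.lt_of_lt_of_le Nat.zero_lt_one ht1
  -- pointwise bound x(1-x)^t ≤ εγ
  have hbound : ∀ x : ℝ, 0 ≤ x → x ≤ 1 → x * (1 - x) ^ t ≤ ε * γ := by
    intro x hx hx1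
    have h1 : (1 - x) ^ t ≤ Real.exp (-((t:ℝ) * x)) := by
      calc (1 - x) ^ t ≤ (Real.exp (-x)) ^ t := by
            apply pow_le_pow_left₀ (by linarith)
            have := Real.add_one_le_exp (-x); linarith
        _ = Real.exp (-((t:ℝ) * x)) := by
            rw [← Real.exp_nat_mul]; ring_nf
    have h2 : x * (1 - x) ^ t ≤ x * Real.exp (-((t:ℝ) * x)) :=
      mul_le_mul_of_nonneg_left h1 hx
    have h3 : (t:ℝ) * x * Real.exp (-((t:ℝ) * x)) ≤ Real.exp (-1 : ℝ) := by
      have hu : (t:ℝ) * x ≤ Real.exp ((t:ℝ) * x - 1) := by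
        have := Real.add_one_le_exp ((t:ℝ) * x - 1); linarith
      calc (t:ℝ) * x * Real.exp (-((t:ℝ) * x))
          ≤ Real.exp ((t:ℝ) * x - 1) * Real.exp (-((t:ℝ) * x)) :=
            mul_le_mul_of_nonneg_right hu (Real.exp_nonneg _)
        _ = Real.exp (-1 : ℝ) := by rw [← Real.exp_add]; ring_nf
    have h4 : x * Real.exp (-((t:ℝ) * x)) ≤ Real.exp (-1:ℝ) / t := by
      rw [le_div_iff₀ htpos]
      calc x * Real.exp (-((t:ℝ) * x)) * t = (t:ℝ) * x * Real.exp (-((t:ℝ) * x)) := by ring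
        _ ≤ Real.exp (-1:ℝ) := h3
    have h5 : Real.exp (-1:ℝ) / t ≤ ε * γ := by
      rw [div_le_iff₀ htpos, Real.exp_neg]
      rw [div_le_iff₀ hte] at htt
      calc (Real.exp 1)⁻¹ = 1 / Real.exp 1 := by rw [one_div]
        _ ≤ ε * γ * t := by
            rw [div_le_iff₀ (Real.exp_pos 1)]
            nlinarith [Real.exp_pos 1]
    linarith
  -- probabilistic setup
  set w : (Fin t → Fin N) → ℝ := fun v => ∏ j, q (v j) with hw
  set Bad : (Fin t → Fin N) → Finset (Fin N) :=
    fun v => univ.filter (fun i => ∀ j, (i, v j) ∉ S) with hBad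
  set B : (Fin t → Fin N) → ℝ := fun v => ∑ i ∈ Bad v, p i * a i with hB
  have hw0 : ∀ v, 0 ≤ w v := fun v => Finset.prod_nonneg fun j _ => hq (v j)
  have hw1 : ∑ v : Fin t → Fin N, w v = 1 := by
    rw [hw]
    rw [← Fintype.piFinset_univ, ← Finset.prod_univ_sum]
    simp [hq1]
  have hsumg : ∀ i : Fin N, (∑ k, if (i, k) ∈ S then 0 else q k) = 1 - a i := by
    intro i
    have := Finset.sum_filter_add_sum_filter_not univ (fun k => (i, k) ∈ S) q
    rw [hq1] at this
    rw [Finset.sum_ite, Finset.sum_const, smul_zero, zero_add, ha]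
    linarith [this]
  have expect : ∑ v : Fin t → Fin N, w v * B v = ∑ i, (p i * a i) * (1 - a i) ^ t := by
    have step1 : ∀ v : Fin t → Fin N,
        w v * B v = ∑ i, (p i * a i) * ∏ j, (if (i, v j) ∈ S then 0 else q (v j)) := by
      intro v
      rw [hB, Finset.mul_sum, hBad, Finset.sum_filter]
      apply Finset.sum_congr rfl
      intro i _
      by_cases h : ∀ j, (i, v j) ∉ S
      · have hpr : (∏ j, (if (i, v j) ∈ S then 0 else q (v j))) = w v := by
          rw [hw]; exact Finset.prod_congr rfl fun j _ => by simp [h j]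
        rw [if_pos h, ← hpr]; ring
      · rw [if_neg h]
        push_neg at h
        obtain ⟨j, hj⟩ := h
        rw [Finset.prod_eq_zero (Finset.mem_univ j) (by simp [hj])]
        ring
    calc ∑ v : Fin t → Fin N, w v * B v
        = ∑ v : Fin t → Fin N, ∑ i, (p i * a i) * ∏ j, (if (i, v j) ∈ S then 0 else q (v j)) :=
          Finset.sum_congr rfl fun v _ => step1 v
      _ = ∑ i, (p i * a i) * ∑ v : Fin t → Fin N, ∏ j, (if (i, v j) ∈ S then 0 else q (v j)) := by
          rw [Finset.sum_comm]
          exact Finset.sum_congr rfl fun i _ => (Finset.mul_sum _ _ _).symm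
      _ = ∑ i, (p i * a i) * (1 - a i) ^ t := by
          apply Finset.sum_congr rfl
          intro i _
          congr 1
          have hps := Finset.prod_univ_sum (fun _ : Fin t => (univ : Finset (Fin N)))
            (fun _ k => if (i, k) ∈ S then 0 else q k)
          rw [← Fintype.piFinset_univ, ← hps, hsumg i, Finset.prod_const, Finset.card_univ,
            Fintype.card_fin]
  have expect_le : ∑ v : Fin t → Fin N, w v * B v ≤ ε * γ := by
    rw [expect]
    calc ∑ i, (p i * a i) * (1 - a i) ^ t
        ≤ ∑ i, p i * (ε * γ) := by
          apply Finset.sum_le_sum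
          intro i _
          have := hbound (a i) (ha0 i) (ha1 i)
          calc (p i * a i) * (1 - a i) ^ t = p i * (a i * (1 - a i) ^ t) := by ring
            _ ≤ p i * (ε * γ) := mul_le_mul_of_nonneg_left this (hp i)
      _ = ε * γ := by rw [← Finset.sum_mul, hp1, one_mul]
  -- find a good v
  have hexv : ∃ v : Fin t → Fin N, B v ≤ ε * γ := by
    by_contra hcon
    push_neg at hcon
    have hzlt : (∑ _v : Fin t → Fin N, (0:ℝ)) < ∑ v : Fin t → Fin N, w v := by
      simp [hw1]
    obtain ⟨v0, -, hv0⟩ := Finset.exists_lt_of_sum_lt hzlt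
    have hlt : ∑ v : Fin t → Fin N, w v * (ε * γ) < ∑ v : Fin t → Fin N, w v * B v := by
      apply Finset.sum_lt_sum
      · intro v _; exact mul_le_mul_of_nonneg_left (hcon v).le (hw0 v)
      · exact ⟨v0, Finset.mem_univ v0, mul_lt_mul_of_pos_left (hcon v0) hv0⟩
    rw [← Finset.sum_mul, hw1, one_mul] at hlt
    linarith
  obtain ⟨v, hv⟩ := hexv
  refine ⟨Finset.image v univ, ?_, ?_⟩
  · calc (Finset.image v univ).card ≤ (univ : Finset (Fin t)).card := Finset.card_image_le
      _ = t := by simp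
  · have hnum := key (fun i => ∃ k ∈ Finset.image v univ, (i, k) ∈ S)
    have hsplit := Finset.sum_filter_add_sum_filter_not univ
      (fun i => ∃ k ∈ Finset.image v univ, (i, k) ∈ S) (fun i => p i * a i)
    rw [hεa] at hsplit
    have hbadeq : univ.filter (fun i => ¬ ∃ k ∈ Finset.image v univ, (i, k) ∈ S) = Bad v := by
      rw [hBad]
      apply Finset.filter_congr
      intro i _
      simp
    rw [hbadeq] at hsplit
    have hBv : B v = ∑ i ∈ Bad v, p i * a i := rfl
    rw [le_div_iff₀ hεpos]
    rw [hnum]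
    nlinarith [hv, hsplit]
end

section
/- Let |ψ⟩ ∈ H_A and |φ⟩ ∈ H_B ⊗ H_C be unit vectors with H_A ≅ H_B, and suppose tr(Π_sym (|ψ⟩⟨ψ| ⊗ |φ⟩⟨φ|)) ≥ 1 - ε > 1/2, where Π_sym = (I + F)/2 projects onto the symmetric subspace of H_A ⊗ H_B. Then there exists a unit vector |φ₂⟩ ∈ H_C such that the trace distance between |φ⟩ and |ψ⟩⊗|φ₂⟩ is at most √(2ε). -/
/-!
Write `w := (⟨ψ|_B ⊗ I_C)|φ⟩`. The identity part of `Π_sym` contributes `1/2` to the trace and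
the swap part contributes `‖w‖²/2`, so the hypothesis says `‖w‖² ≥ 1 - 2ε > 0`. The normalised
vector `φ₂ := w / ‖w‖` has overlap `⟨ψ ⊗ φ₂|φ⟩ = ⟨φ₂|w⟩ = ‖w‖`, hence
`1 - |⟨ψ ⊗ φ₂|φ⟩|² = 1 - ‖w‖² ≤ 2ε`.
-/

open Matrix Kronecker ComplexConjugate

section

variable {ι κ : Type*}

/-- The swap `F` of the registers `A` and `B` of `A ⊗ (B ⊗ C)`. -/
def swapRegisters : Equiv.Perm (ι × (ι × κ)) :=
  Function.Involutive.toPerm (fun u => (u.2.1, (u.1, u.2.2))) fun _ => rfl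

@[simp]
lemma swapRegisters_apply (u : ι × (ι × κ)) : swapRegisters u = (u.2.1, (u.1, u.2.2)) := rfl

lemma eq_toMatrix_swapRegisters [DecidableEq ι] [DecidableEq κ]
    (F : Matrix (ι × (ι × κ)) (ι × (ι × κ)) ℂ)
    (hF : ∀ u v, F u v = if u.1 = v.2.1 ∧ u.2.1 = v.1 ∧ u.2.2 = v.2.2 then 1 else 0) :
    F = (swapRegisters : Equiv.Perm (ι × (ι × κ))).toPEquiv.toMatrix := by
  ext ⟨i, j, k⟩ ⟨i', j', k'⟩
  rw [hF, PEquiv.toMatrix_apply]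
  simp [and_left_comm]

variable [Fintype ι] [Fintype κ]

lemma sum_conj_mul_self (v : ι → ℂ) : ∑ i, conj (v i) * v i = ((∑ i, ‖v i‖ ^ 2 : ℝ) : ℂ) := by
  push_cast
  exact Finset.sum_congr rfl fun i _ => Complex.conj_mul' (v i)

lemma trace_vecMulVec_star_self (v : ι → ℂ) :
    (vecMulVec v (star v)).trace = ((∑ i, ‖v i‖ ^ 2 : ℝ) : ℂ) := by
  rw [trace_vecMulVec, dotProduct_comm, ← sum_conj_mul_self]
  rfl

/-- The partial inner product `(⟨ψ|_B ⊗ I_C)|φ⟩`. -/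
def partialInner (ψ : ι → ℂ) (φ : ι × κ → ℂ) (k : κ) : ℂ := ∑ i, conj (ψ i) * φ (i, k)

lemma trace_swapRegisters_mul_kronecker [DecidableEq ι] [DecidableEq κ]
    (ψ : ι → ℂ) (φ : ι × κ → ℂ) :
    ((swapRegisters : Equiv.Perm (ι × (ι × κ))).toPEquiv.toMatrix *
      (vecMulVec ψ (star ψ) ⊗ₖ vecMulVec φ (star φ))).trace =
      ((∑ k, ‖partialInner ψ φ k‖ ^ 2 : ℝ) : ℂ) := by
  rw [PEquiv.toMatrix_toPEquiv_mul, ← sum_conj_mul_self]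
  simp only [trace, diag, submatrix_apply, id, kroneckerMap_apply, vecMulVec_apply, Pi.star_apply,
    partialInner, map_sum, map_mul, Complex.conj_conj, Finset.sum_mul_sum, Fintype.sum_prod_type,
    swapRegisters_apply]
  rw [Finset.sum_comm_cycle]
  refine Finset.sum_congr rfl fun k _ => ?_
  rw [Finset.sum_comm]
  refine Finset.sum_congr rfl fun j _ => Finset.sum_congr rfl fun i _ => ?_
  simp only [Complex.star_def]
  ring

lemma re_trace_half_one_add_swap_mul_kronecker [DecidableEq ι] [DecidableEq κ]
    (ψ : ι → ℂ) (φ : ι × κ → ℂ) (hψ : ∑ i, ‖ψ i‖ ^ 2 = 1) (hφ : ∑ p, ‖φ p‖ ^ 2 = 1) :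
    (((2 : ℂ)⁻¹ • (1 + (swapRegisters : Equiv.Perm (ι × (ι × κ))).toPEquiv.toMatrix)) *
        (vecMulVec ψ (star ψ) ⊗ₖ vecMulVec φ (star φ))).trace.re =
      (1 + ∑ k, ‖partialInner ψ φ k‖ ^ 2) / 2 := by
  rw [smul_mul, trace_smul, add_mul, one_mul, trace_add, trace_kronecker,
    trace_swapRegisters_mul_kronecker, trace_vecMulVec_star_self, trace_vecMulVec_star_self, hψ, hφ,
    smul_eq_mul]
  generalize ∑ k, ‖partialInner ψ φ k‖ ^ 2 = S
  norm_num [Complex.mul_re]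
  ring

lemma exists_unit_sum_conj_mul_eq_sqrt (w : κ → ℂ) (hw : 0 < ∑ k, ‖w k‖ ^ 2) :
    ∃ v : κ → ℂ, ∑ k, ‖v k‖ ^ 2 = 1 ∧ ∑ k, conj (v k) * w k = √(∑ k, ‖w k‖ ^ 2) := by
  set S := ∑ k, ‖w k‖ ^ 2
  have hsqrt : (0 : ℝ) < √S := Real.sqrt_pos.mpr hw
  refine ⟨fun k => w k / (√S : ℂ), ?_, ?_⟩
  · simp only [norm_div, div_pow, Complex.norm_real, Real.norm_of_nonneg hsqrt.le,
      Real.sq_sqrt hw.le, ← Finset.sum_div]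
    exact div_self hw.ne'
  · simp only [map_div₀, Complex.conj_ofReal, div_mul_eq_mul_div, ← Finset.sum_div,
      sum_conj_mul_self]
    rw [div_eq_iff (by exact_mod_cast hsqrt.ne'), ← Complex.ofReal_mul, Real.mul_self_sqrt hw.le]

lemma sum_conj_mul_mul_eq_sum_conj_mul_partialInner (ψ : ι → ℂ) (χ : κ → ℂ) (φ : ι × κ → ℂ) :
    ∑ p : ι × κ, conj (ψ p.1 * χ p.2) * φ p = ∑ k, conj (χ k) * partialInner ψ φ k := by
  rw [Fintype.sum_prod_type_right]
  simp only [partialInner, Finset.mul_sum, map_mul]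
  exact Finset.sum_congr rfl fun k _ => Finset.sum_congr rfl fun i _ => by ring

end

/-- If `|ψ⟩ ∈ H_A` and `|φ⟩ ∈ H_B ⊗ H_C` are unit vectors (with `H_A ≅ H_B = ℂ^a`,
`H_C = ℂ^c`) and `tr(Π_sym (|ψ⟩⟨ψ| ⊗ |φ⟩⟨φ|)) ≥ 1 - ε > 1/2`, where
`Π_sym = (I + F)/2` with `F` the swap of registers `A` and `B`, then there is a unit
vector `|φ₂⟩ ∈ H_C` with trace distance `d_tr(|φ⟩, |ψ⟩⊗|φ₂⟩) ≤ √(2ε)`. -/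
theorem close_to_product_of_symmetric (a c : ℕ) (ψ : Fin a → ℂ) (φ : Fin a × Fin c → ℂ)
    (hψ : ∑ i, ‖ψ i‖ ^ 2 = 1) (hφ : ∑ p, ‖φ p‖ ^ 2 = 1)
    (ε : ℝ) (hε : ε < 1 / 2)
    (F : Matrix (Fin a × (Fin a × Fin c)) (Fin a × (Fin a × Fin c)) ℂ)
    (hF : ∀ u v, F u v = if u.1 = v.2.1 ∧ u.2.1 = v.1 ∧ u.2.2 = v.2.2 then 1 else 0)
    (h : 1 - ε ≤
      (((2 : ℂ)⁻¹ • (1 + F)) *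
        (Matrix.vecMulVec ψ (star ψ) ⊗ₖ Matrix.vecMulVec φ (star φ))).trace.re) :
    ∃ φ₂ : Fin c → ℂ, (∑ k, ‖φ₂ k‖ ^ 2 = 1) ∧
      Real.sqrt (1 - ‖∑ p : Fin a × Fin c, (starRingEnd ℂ) (ψ p.1 * φ₂ p.2) * φ p‖ ^ 2)
        ≤ Real.sqrt (2 * ε) := by
  set S := ∑ k, ‖partialInner ψ φ k‖ ^ 2
  have hS : 1 - 2 * ε ≤ S := by
    rw [eq_toMatrix_swapRegisters F hF, re_trace_half_one_add_swap_mul_kronecker ψ φ hψ hφ] at h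
    linarith
  obtain ⟨φ₂, hφ₂, hoverlap⟩ := exists_unit_sum_conj_mul_eq_sqrt (partialInner ψ φ) (by linarith)
  refine ⟨φ₂, hφ₂, ?_⟩
  rw [sum_conj_mul_mul_eq_sum_conj_mul_partialInner, hoverlap, Complex.norm_real,
    Real.norm_of_nonneg (Real.sqrt_nonneg _), Real.sq_sqrt (by linarith)]
  exact Real.sqrt_le_sqrt (by linarith)
end

section
/- Let ρ be a density matrix and M an operator with 0 ≤ M ≤ I such that tr(Mρ) ≥ 1 - ε. Then the post-measurement state ρ' = √M ρ √M / tr(Mρ) satisfies d_tr(ρ, ρ') ≤ 2√ε. -/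
/-!
Write `X = √M` and `p = tr (M ρ) = tr (X ρ X)`. The trace norm of the Hermitian matrix `ρ - ρ'`
is `tr ((ρ - ρ') U)` for the unitary `U = sign (ρ - ρ')`, and
`ρ - p⁻¹ X ρ X = (1 - X) ρ + X ρ (1 - X) + (1 - p⁻¹) X ρ X`.
Cauchy–Schwarz for the semi-inner product `(A, B) ↦ tr (A ρ B)` bounds the first two terms by
`√tr ((1 - X) ρ (1 - X)) ≤ √(1 - p)`, because `M ≤ 1` gives `X ≥ X² = M`, and the last one by
`|1 - p⁻¹| p ≤ 1 - p` (also at `p = 0`, where `p⁻¹ = 0` makes `ρ' = 0`).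
Hence `‖ρ - ρ'‖₁ ≤ 2 √(1 - p) + (1 - p) ≤ 3 √ε`.
-/

open Matrix ComplexOrder

/-- The square root `Matrix.PosSemidef.sqrt` of a positive semidefinite matrix, as Mathlib
(December 2024) defined it; that definition has since been removed from Mathlib. -/
noncomputable def Matrix.PosSemidef.sqrt {n : Type*} [Fintype n] [DecidableEq n]
    {A : Matrix n n ℂ} (hA : A.PosSemidef) : Matrix n n ℂ :=
  hA.1.eigenvectorUnitary.1 * diagonal ((↑) ∘ (√·) ∘ hA.1.eigenvalues) *
    (star hA.1.eigenvectorUnitary : Matrix n n ℂ)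

open scoped MatrixOrder

lemma abs_one_sub_inv_mul_self_le {q : ℝ} (hq0 : 0 ≤ q) (hq1 : q ≤ 1) :
    |1 - q⁻¹| * q ≤ 1 - q := by
  rcases hq0.eq_or_lt with rfl | hq
  · simp
  · rw [abs_of_nonpos (by linarith [one_le_inv_iff₀.2 ⟨hq, hq1⟩]), neg_sub, sub_mul,
      inv_mul_cancel₀ hq.ne', one_mul]

lemma sub_smul_mul_mul_eq_add {R A : Type*} [Ring R] [Ring A] [Module R A] (c : R) (a x : A) :
    a - c • (x * a * x) = (1 - x) * a + x * a * (1 - x) + (1 - c) • (x * a * x) := by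
  simp only [sub_mul, mul_sub, sub_smul, one_smul, one_mul, mul_one]
  abel

namespace Matrix

variable {n : Type*} [Fintype n]

lemma PosSemidef.norm_trace_mul_mul_le {𝕜 : Type*} [RCLike 𝕜] {ρ : Matrix n n 𝕜}
    (hρ : ρ.PosSemidef) (A B : Matrix n n 𝕜) :
    ‖(A * ρ * B).trace‖ ≤
      √(RCLike.re (A * ρ * Aᴴ).trace) * √(RCLike.re (Bᴴ * ρ * B).trace) := by
  let _ := ρ.toMatrixSeminormedAddCommGroup hρ
  let _ := ρ.toMatrixInnerProductSpace hρ
  have h : ‖(A * ρ * Bᴴᴴ).trace‖ ≤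
      √(RCLike.re (Bᴴ * ρ * Bᴴᴴ).trace) * √(RCLike.re (A * ρ * Aᴴ).trace) :=
    norm_inner_le_norm (𝕜 := 𝕜) Bᴴ A
  rwa [conjTranspose_conjTranspose, mul_comm] at h

variable [DecidableEq n]

lemma trace_star_mul_mul_of_mem_unitary {R : Type*} [CommRing R] [StarRing R]
    {U : Matrix n n R} (hU : U ∈ unitary (Matrix n n R)) (A : Matrix n n R) :
    (star U * A * U).trace = A.trace := by
  rw [trace_mul_cycle, Unitary.mul_star_self_of_mem hU, one_mul]

lemma PosSemidef.norm_trace_mul_mul_mul_le_of_mem_unitary {𝕜 : Type*} [RCLike 𝕜]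
    {ρ U : Matrix n n 𝕜} (hρ : ρ.PosSemidef) (hU : U ∈ unitary (Matrix n n 𝕜))
    (A B : Matrix n n 𝕜) :
    ‖(A * ρ * (B * U)).trace‖ ≤
      √(RCLike.re (A * ρ * Aᴴ).trace) * √(RCLike.re (Bᴴ * ρ * B).trace) := by
  have h := hρ.norm_trace_mul_mul_le A (B * U)
  have hB : (B * U)ᴴ * ρ * (B * U) = star U * (Bᴴ * ρ * B) * U := by
    simp only [conjTranspose_mul, star_eq_conjTranspose, mul_assoc]
  rwa [hB, trace_star_mul_mul_of_mem_unitary hU] at h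

lemma IsHermitian.exists_mem_unitary_trace_mul_eq_sum_abs_eigenvalues {𝕜 : Type*} [RCLike 𝕜]
    {S : Matrix n n 𝕜} (hS : S.IsHermitian) :
    ∃ U ∈ unitary (Matrix n n 𝕜), (S * U).trace = ∑ i, ((|hS.eigenvalues i| : ℝ) : 𝕜) := by
  have hS' : IsSelfAdjoint S := hS.isSelfAdjoint
  let sgn : ℝ → ℝ := fun x => if 0 ≤ x then 1 else -1
  have hcont : ContinuousOn sgn (spectrum ℝ S) := S.finite_real_spectrum.continuousOn _
  refine ⟨cfc sgn S, (cfc_unitary_iff sgn S).2 fun x _ => ?_, ?_⟩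
  · by_cases hx : 0 ≤ x <;> simp [sgn, hx]
  · have habs : S * cfc sgn S = cfc (fun x : ℝ => |x|) S := by
      nth_rw 1 [← cfc_id' ℝ S]
      rw [← cfc_mul ..]
      refine cfc_congr fun x _ => ?_
      by_cases hx : 0 ≤ x
      · simp [sgn, hx, abs_of_nonneg hx]
      · simp [sgn, hx, abs_of_neg (not_le.1 hx)]
    rw [habs, hS.cfc_eq, IsHermitian.cfc, Unitary.conjStarAlgAut_apply, trace_mul_cycle,
      Unitary.coe_star_mul_self, one_mul, trace_diagonal]
    rfl

lemma PosSemidef.sqrt_eq_cfc {A : Matrix n n ℂ} (hA : A.PosSemidef) :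
    hA.sqrt = cfc Real.sqrt A := by
  rw [hA.1.cfc_eq]
  rfl

lemma PosSemidef.isHermitian_sqrt {A : Matrix n n ℂ} (hA : A.PosSemidef) :
    hA.sqrt.IsHermitian := by
  rw [hA.sqrt_eq_cfc]
  exact cfc_predicate Real.sqrt A

lemma PosSemidef.sqrt_mul_self {A : Matrix n n ℂ} (hA : A.PosSemidef) :
    hA.sqrt * hA.sqrt = A := by
  rw [hA.sqrt_eq_cfc, ← cfc_mul Real.sqrt Real.sqrt A]
  conv_rhs => rw [← cfc_id' ℝ A]
  exact cfc_congr fun x hx => Real.mul_self_sqrt (spectrum_nonneg_of_nonneg hA.nonneg hx)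

lemma PosSemidef.posSemidef_sqrt_sub_self {A : Matrix n n ℂ} (hA : A.PosSemidef)
    (hA1 : (1 - A).PosSemidef) : (hA.sqrt - A).PosSemidef := by
  have hle : A ≤ algebraMap ℝ (Matrix n n ℂ) 1 := by rw [map_one]; exact hA1
  have hspec : ∀ x ∈ spectrum ℝ A, x ≤ 1 := (le_algebraMap_iff_spectrum_le).1 hle
  change A ≤ hA.sqrt
  rw [hA.sqrt_eq_cfc]
  conv_lhs => rw [← cfc_id' ℝ A]
  refine cfc_mono fun x hx => ?_
  have hx0 : 0 ≤ x := spectrum_nonneg_of_nonneg hA.nonneg hx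
  exact (Real.le_sqrt hx0 hx0).2 (by nlinarith [hspec x hx])

lemma PosSemidef.trace_mul_nonneg {A B : Matrix n n ℂ} (hA : A.PosSemidef) (hB : B.PosSemidef) :
    0 ≤ (A * B).trace := by
  have h := (hB.mul_mul_conjTranspose_same hA.sqrt).trace_nonneg
  rwa [hA.isHermitian_sqrt.eq, trace_mul_cycle, hA.sqrt_mul_self] at h

lemma re_trace_one_sub_mul_mul_one_sub_le {ρ X : Matrix n n ℂ} (hρ : ρ.PosSemidef)
    (hρ1 : ρ.trace = 1) (hXX : (X - X * X).PosSemidef) :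
    ((1 - X) * ρ * (1 - X)).trace.re ≤ 1 - (X * ρ * X).trace.re := by
  have hXρ : (X * ρ * X).trace.re ≤ (X * ρ).trace.re := by
    have hXXρ : (X * X * ρ).trace = (X * ρ * X).trace := by rw [mul_assoc, trace_mul_comm]
    have h := (Complex.nonneg_iff.1 (hXX.trace_mul_nonneg hρ)).1
    rw [sub_mul, trace_sub, hXXρ, Complex.sub_re] at h
    linarith
  have hexpand : ((1 - X) * ρ * (1 - X)).trace = 1 - 2 * (X * ρ).trace + (X * ρ * X).trace := by
    simp only [sub_mul, mul_sub, one_mul, mul_one, trace_sub, hρ1, trace_mul_comm ρ X]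
    ring
  rw [hexpand]
  simp only [Complex.add_re, Complex.sub_re, Complex.one_re, Complex.mul_re, Complex.re_ofNat,
    Complex.im_ofNat, zero_mul, sub_zero]
  linarith

lemma norm_trace_sub_smul_mul_le {ρ X U : Matrix n n ℂ} (hρ : ρ.PosSemidef) (hρ1 : ρ.trace = 1)
    (hX : X.IsHermitian) (hXX : (X - X * X).PosSemidef) (hU : U ∈ unitary (Matrix n n ℂ)) :
    ‖((ρ - (X * ρ * X).trace⁻¹ • (X * ρ * X)) * U).trace‖ ≤
      2 * √(1 - (X * ρ * X).trace.re) + (1 - (X * ρ * X).trace.re) := by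
  set p := (X * ρ * X).trace
  set q := p.re
  set g := ((1 - X) * ρ * (1 - X)).trace.re
  have hXH : Xᴴ = X := hX.eq
  have h1XH : (1 - X)ᴴ = 1 - X := by rw [conjTranspose_sub, conjTranspose_one, hXH]
  have hp0 : 0 ≤ p := by simpa [hXH] using (hρ.mul_mul_conjTranspose_same X).trace_nonneg
  have hpq : p = q := Complex.eq_re_of_ofReal_le (by rwa [Complex.ofReal_zero])
  have hq0 : 0 ≤ q := (Complex.nonneg_iff.1 hp0).1
  have hg0 : 0 ≤ g := by
    have h := (hρ.mul_mul_conjTranspose_same (1 - X)).trace_nonneg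
    rw [h1XH] at h
    exact (Complex.nonneg_iff.1 h).1
  have hgq : g ≤ 1 - q := re_trace_one_sub_mul_mul_one_sub_le hρ hρ1 hXX
  have hq1 : q ≤ 1 := by linarith
  have hsplit : ((ρ - p⁻¹ • (X * ρ * X)) * U).trace = ((1 - X) * ρ * U).trace +
      (X * ρ * ((1 - X) * U)).trace + (1 - p⁻¹) * (X * ρ * (X * U)).trace := by
    rw [sub_smul_mul_mul_eq_add, add_mul, add_mul, smul_mul_assoc, trace_add, trace_add,
      trace_smul, smul_eq_mul]
    simp only [mul_assoc]
  have h1 : ‖((1 - X) * ρ * U).trace‖ ≤ √g := by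
    simpa [h1XH, hρ1] using hρ.norm_trace_mul_mul_mul_le_of_mem_unitary hU (1 - X) 1
  have h2 : ‖(X * ρ * ((1 - X) * U)).trace‖ ≤ √q * √g := by
    simpa only [h1XH, hXH, RCLike.re_to_complex] using
      hρ.norm_trace_mul_mul_mul_le_of_mem_unitary hU X (1 - X)
  have h3 : ‖(X * ρ * (X * U)).trace‖ ≤ √q * √q := by
    simpa only [hXH, RCLike.re_to_complex] using
      hρ.norm_trace_mul_mul_mul_le_of_mem_unitary hU X X
  have hsqrt_g : √g ≤ √(1 - q) := Real.sqrt_le_sqrt hgq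
  have hsqrt_q : √q ≤ 1 := Real.sqrt_le_one.2 hq1
  have hc : ‖1 - p⁻¹‖ * q ≤ 1 - q := by
    rw [hpq, ← Complex.ofReal_one, ← Complex.ofReal_inv, ← Complex.ofReal_sub, Complex.norm_real,
      Real.norm_eq_abs]
    exact abs_one_sub_inv_mul_self_le hq0 hq1
  rw [hsplit]
  calc _ ≤ ‖((1 - X) * ρ * U).trace‖ + ‖(X * ρ * ((1 - X) * U)).trace‖ +
        ‖1 - p⁻¹‖ * ‖(X * ρ * (X * U)).trace‖ := by
        grw [norm_add₃_le, norm_mul]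
    _ ≤ √g + √q * √g + ‖1 - p⁻¹‖ * q := by
        grw [h1, h2, h3, Real.mul_self_sqrt hq0]
    _ ≤ 2 * √(1 - q) + (1 - q) := by
        nlinarith [Real.sqrt_nonneg q, Real.sqrt_nonneg g]

end Matrix

theorem gentle_measurement_general (d : ℕ) (ρ M : Matrix (Fin d) (Fin d) ℂ)
    (hρ : ρ.PosSemidef) (hρ1 : ρ.trace = 1)
    (hM : M.PosSemidef) (hMI : ((1 : Matrix (Fin d) (Fin d) ℂ) - M).PosSemidef)
    (ε : ℝ)
    (h : 1 - ε ≤ (M * ρ).trace.re)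
    (ρ' : Matrix (Fin d) (Fin d) ℂ)
    (hρ' : ρ' = ((M * ρ).trace)⁻¹ • (hM.sqrt * ρ * hM.sqrt)) :
    ∀ hdiff : (ρ - ρ').IsHermitian,
      (1 / 2) * ∑ i, |hdiff.eigenvalues i| ≤ 2 * Real.sqrt ε := by
  intro hdiff
  obtain ⟨U, hU, hUtrace⟩ := hdiff.exists_mem_unitary_trace_mul_eq_sum_abs_eigenvalues
  have hXX : (hM.sqrt - hM.sqrt * hM.sqrt).PosSemidef := by
    rw [hM.sqrt_mul_self]
    exact hM.posSemidef_sqrt_sub_self hMI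
  have hXρX : (hM.sqrt * ρ * hM.sqrt).trace = (M * ρ).trace := by
    rw [trace_mul_cycle, hM.sqrt_mul_self]
  have hbound := norm_trace_sub_smul_mul_le hρ hρ1 hM.isHermitian_sqrt hXX hU
  rw [hXρX, ← hρ', hUtrace, ← RCLike.ofReal_sum, RCLike.norm_ofReal,
    abs_of_nonneg (by positivity)] at hbound
  set δ := 1 - (M * ρ).trace.re
  have hδ1 : δ ≤ 1 := by linarith [(Complex.nonneg_iff.1 (hM.trace_mul_nonneg hρ)).1]
  have hδ : δ ≤ √δ := Real.le_sqrt_self_iff.2 hδ1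
  have hδε : √δ ≤ √ε := Real.sqrt_le_sqrt (by linarith)
  nlinarith [Real.sqrt_nonneg ε]

/-- Gentle Measurement Lemma: if `ρ` is a density matrix, `0 ≤ M ≤ I`, and
`tr(Mρ) ≥ 1 - ε`, then the post-measurement state `ρ' = √M ρ √M / tr(Mρ)` satisfies
`d_tr(ρ, ρ') ≤ 2√ε` (trace distance computed as half the sum of the absolute values of
the eigenvalues of `ρ - ρ'`). -/
theorem gentle_measurement (d : ℕ) (ρ M : Matrix (Fin d) (Fin d) ℂ)
    (hρ : ρ.PosSemidef) (hρ1 : ρ.trace = 1)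
    (hM : M.PosSemidef) (hMI : ((1 : Matrix (Fin d) (Fin d) ℂ) - M).PosSemidef)
    (ε : ℝ) (hε : 0 ≤ ε)
    (h : 1 - ε ≤ (M * ρ).trace.re)
    (ρ' : Matrix (Fin d) (Fin d) ℂ)
    (hρ' : ρ' = ((M * ρ).trace)⁻¹ • (hM.sqrt * ρ * hM.sqrt)) :
    ∀ hdiff : (ρ - ρ').IsHermitian,
      (1 / 2) * ∑ i, |hdiff.eigenvalues i| ≤ 2 * Real.sqrt ε :=
  gentle_measurement_general d ρ M hρ hρ1 hM hMI ε h ρ' hρ'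
end
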